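/- arXiv:1508.06593 — 6 statements merged into one kernel-verified Lean document; each statement's English description precedes it below -/
import Mathlib

section
/- Let n ≥ 2, 1 ≤ k ≤ n−1, and let x = (x_1, …, x_n) be a central configuration in ℝ^{n−k} of dimension δ(x) = n−k for the potential U_a, with masses m_1, …, m_n, total mass M ≠ 0 and multiplier λ. Then for every choice of indices 1 ≤ i_1 < ⋯ < i_k ≤ n and every j ∈ {1, …, n} \ {i_1, …, i_k}, one has ∑_{l=1}^{k} (−1)^l m_{i_l} S_{i_l j} Δ_{i_1 … i_{l−1} i_{l+1} … i_k} = 0. -/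
/-- The dimension of a configuration: the dimension of the smallest affine
subspace containing the points. -/
noncomputable def confDim {d n : ℕ} (x : Fin n → EuclideanSpace ℝ (Fin d)) : ℕ :=
  Module.finrank ℝ (affineSpan ℝ (Set.range x)).direction

/-- `x` is a central configuration for the potential `U_a` (with `c2 = 2a ∈ ℤ`),
masses `m`, and multiplier `lam`:
`∑_{i≠j} m_i (x_i − x_j) r_{ij}^{2a} + λ(x_j − c) = 0` for all `j`,
where `c = M⁻¹ ∑ m_i x_i`. -/
def IsCentralConfig {d n : ℕ} (c2 : ℤ) (m : Fin n → ℝ) (lam : ℝ)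
    (x : Fin n → EuclideanSpace ℝ (Fin d)) : Prop :=
  ∀ j : Fin n,
    (∑ i ∈ Finset.univ \ {j}, (m i * dist (x i) (x j) ^ c2) • (x i - x j))
      + lam • (x j - (∑ i, m i)⁻¹ • ∑ i, m i • x i) = 0

/-- `S_{ij} = r_{ij}^{2a} − λ/M`. -/
noncomputable def Sij {n d : ℕ} (c2 : ℤ) (lam M : ℝ)
    (x : Fin n → EuclideanSpace ℝ (Fin d)) (i j : Fin n) : ℝ :=
  dist (x i) (x j) ^ c2 - lam / M

/-- `Δ_s` for a finite set `s` of removed indices: the sign `(−1)^{∑ (1-based indices in s)}`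
times the determinant of the square matrix (of size `sᶜ.card`) whose columns, in increasing
order of `j ∉ s`, are the vectors `(1, x_j)`. -/
noncomputable def Delta {n d : ℕ} (x : Fin n → EuclideanSpace ℝ (Fin d))
    (s : Finset (Fin n)) : ℝ :=
  (-1 : ℝ) ^ (∑ i ∈ s, ((i : ℕ) + 1)) *
    Matrix.det (Matrix.of fun p q : Fin sᶜ.card =>
      if (p : ℕ) = 0 then 1
      else if hd : (p : ℕ) - 1 < d then (x ((sᶜ.orderIsoOfFin rfl q).1)) ⟨(p : ℕ) - 1, hd⟩
      else 0)


/-- Row entry function for the configuration matrices. -/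
noncomputable def eRow {d : ℕ} (p : ℕ) (v : EuclideanSpace ℝ (Fin d)) : ℝ :=
  if p = 0 then 1 else if hd : p - 1 < d then v ⟨p - 1, hd⟩ else 0

lemma orderEmbOfFin_cast {α : Type*} [LinearOrder α] (A : Finset α) {c : ℕ}
    (h : A.card = c) (q : Fin c) :
    A.orderEmbOfFin rfl (Fin.cast h.symm q) = A.orderEmbOfFin h q := by
  have hu : (fun q : Fin c => A.orderEmbOfFin rfl (Fin.cast h.symm q)) = A.orderEmbOfFin h :=
    Finset.orderEmbOfFin_unique h (fun q => Finset.orderEmbOfFin_mem _ _ _)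
      ((A.orderEmbOfFin rfl).strictMono.comp fun a b hab => hab)
  exact congrFun hu q

open Finset in
lemma orderEmbOfFin_pos {N : ℕ} (A : Finset (Fin N)) {c : ℕ} (h : A.card = c) (q : Fin c) :
    (A.filter (fun b => b < A.orderEmbOfFin h q)).card = (q : ℕ) := by
  have himg : A.filter (fun b => b < A.orderEmbOfFin h q)
      = (Finset.Iio q).image (A.orderEmbOfFin h) := by
    ext b
    simp only [mem_filter, mem_image, mem_Iio]
    constructor
    · rintro ⟨hbA, hlt⟩
      have hb : b ∈ Set.range (A.orderEmbOfFin h) := by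
        rw [Finset.range_orderEmbOfFin]; exact hbA
      obtain ⟨u, rfl⟩ := hb
      exact ⟨u, (A.orderEmbOfFin h).strictMono.lt_iff_lt.mp hlt, rfl⟩
    · rintro ⟨u, hu, rfl⟩
      exact ⟨Finset.orderEmbOfFin_mem _ _ _, (A.orderEmbOfFin h).strictMono hu⟩
  rw [himg, Finset.card_image_of_injective _ (A.orderEmbOfFin h).injective, Fin.card_Iio]

lemma det_updateCol_finsum {m : ℕ} (A : Matrix (Fin m) (Fin m) ℝ) (j : Fin m)
    {β : Type*} [DecidableEq β] (s : Finset β) (f : β → Fin m → ℝ) :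
    (A.updateCol j (∑ b ∈ s, f b)).det = ∑ b ∈ s, (A.updateCol j (f b)).det := by
  induction s using Finset.induction_on with
  | empty =>
      rw [Finset.sum_empty, Finset.sum_empty]
      exact Matrix.det_eq_zero_of_column_eq_zero j (fun i => by
        simp [Matrix.updateCol_self])
  | @insert a s ha ih =>
      rw [Finset.sum_insert ha, Finset.sum_insert ha, Matrix.det_updateCol_add, ih]

open Finset in
lemma delta_eq {n d : ℕ} (x : Fin n → EuclideanSpace ℝ (Fin d)) (t : Finset (Fin n))
    {c : ℕ} (h : tᶜ.card = c) :
    Delta x t = (-1 : ℝ) ^ (∑ i ∈ t, ((i : ℕ) + 1)) *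
      Matrix.det (Matrix.of fun p q : Fin c => eRow (p : ℕ) (x (tᶜ.orderEmbOfFin h q))) := by
  unfold Delta
  congr 1
  have hM : (Matrix.of fun p q : Fin c => eRow (p : ℕ) (x (tᶜ.orderEmbOfFin h q)))
      = (Matrix.of fun p q : Fin tᶜ.card =>
          if (p : ℕ) = 0 then 1
          else if hd : (p : ℕ) - 1 < d then (x ((tᶜ.orderIsoOfFin rfl q).1)) ⟨(p : ℕ) - 1, hd⟩
          else 0).submatrix (finCongr h.symm) (finCongr h.symm) := by
    ext p q
    simp only [Matrix.submatrix_apply, Matrix.of_apply, finCongr_apply]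
    have hemb : ((tᶜ.orderIsoOfFin rfl (Fin.cast h.symm q)).1 : Fin n)
        = tᶜ.orderEmbOfFin h q := by
      rw [Finset.coe_orderIsoOfFin_apply, orderEmbOfFin_cast]
    rw [← hemb]
    rfl
  rw [hM, Matrix.det_submatrix_equiv_self]

open Finset in
lemma main_aux {n k d : ℕ} (hnkd : n = k + d)
    (x : Fin n → EuclideanSpace ℝ (Fin d)) (w : Fin n → ℝ)
    (hw0 : ∑ i, w i = 0) (hwx : ∀ p : Fin d, ∑ i, w i * x i p = 0)
    (ι : Fin k → Fin n) (hmono : StrictMono ι) :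
    ∑ l : Fin k, (-1 : ℝ) ^ ((l : ℕ) + 1) * w (ι l) *
        Delta x ((Finset.image ι Finset.univ).erase (ι l)) = 0 := by
  set s : Finset (Fin n) := Finset.image ι Finset.univ with hs_def
  have hcard : s.card = k := by
    rw [hs_def, Finset.card_image_of_injective _ hmono.injective, Finset.card_univ,
      Fintype.card_fin]
  have hsc : sᶜ.card = d := by
    rw [Finset.card_compl, hcard, Fintype.card_fin]; omega
  have hιeq : ∀ u : Fin k, ι u = s.orderEmbOfFin hcard u := fun u =>
    congrFun (Finset.orderEmbOfFin_unique hcard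
      (fun u => Finset.mem_image_of_mem ι (Finset.mem_univ u)) hmono) u
  set sortedS := sᶜ.orderEmbOfFin hsc with hsortedS
  set col : Fin n → Fin (d + 1) → ℝ := fun i p => eRow (p : ℕ) (x i) with hcol
  set lastc : Fin (d + 1) := Fin.last d with hlastc
  set A0 : Matrix (Fin (d + 1)) (Fin (d + 1)) ℝ :=
    Matrix.of fun p q => if hq : (q : ℕ) < d then col (sortedS ⟨q, hq⟩) p else 0 with hA0
  set G : Fin n → ℝ := fun i => (A0.updateCol lastc (col i)).det with hG
  -- the linear relation, columnwise
  have hsum_col : (∑ i, w i • col i) = 0 := by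
    funext p
    simp only [Finset.sum_apply, Pi.smul_apply, smul_eq_mul, Pi.zero_apply]
    rcases Nat.eq_zero_or_pos (p : ℕ) with hp | hp
    · simp only [hcol, eRow, hp, if_pos rfl]
      simpa using hw0
    · have hlt : (p : ℕ) - 1 < d := by omega
      simp only [hcol, eRow, if_neg (by omega : ¬ (p : ℕ) = 0), dif_pos hlt]
      exact hwx ⟨_, hlt⟩
  have hGsum : ∑ i, w i * G i = 0 := by
    have h1 : ∀ i, w i * G i = (A0.updateCol lastc (w i • col i)).det := fun i =>
      (Matrix.det_updateCol_smul A0 lastc (w i) (col i)).symm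
    calc ∑ i, w i * G i = ∑ i, (A0.updateCol lastc (w i • col i)).det :=
          Finset.sum_congr rfl (fun i _ => h1 i)
      _ = (A0.updateCol lastc (∑ i, w i • col i)).det :=
          (det_updateCol_finsum A0 lastc Finset.univ _).symm
      _ = 0 := by
          rw [hsum_col]
          exact Matrix.det_eq_zero_of_column_eq_zero lastc
            (fun i => by simp [Matrix.updateCol_self])
  have hGzero : ∀ i ∈ sᶜ, G i = 0 := by
    intro i hi
    have hb : i ∈ Set.range sortedS := by
      rw [hsortedS, Finset.range_orderEmbOfFin]; exact hi
    obtain ⟨q0, hq0⟩ := hb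
    apply Matrix.det_zero_of_column_eq (Fin.castSucc_lt_last q0).ne
    intro p
    rw [Matrix.updateCol_ne (Fin.castSucc_lt_last q0).ne, Matrix.updateCol_self]
    have hlt : ((q0.castSucc : Fin (d + 1)) : ℕ) < d := q0.isLt
    have hfe : (⟨((q0.castSucc : Fin (d + 1)) : ℕ), hlt⟩ : Fin d) = q0 := by
      ext; simp
    show (if hq : ((q0.castSucc : Fin (d + 1)) : ℕ) < d then col (sortedS ⟨_, hq⟩) p else 0)
        = col i p
    rw [dif_pos hlt, hfe, hq0]
  have hsG : ∑ l : Fin k, w (ι l) * G (ι l) = 0 := by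
    have hsplit := Finset.sum_add_sum_compl s (fun i => w i * G i)
    have hzero : ∑ i ∈ sᶜ, w i * G i = 0 :=
      Finset.sum_eq_zero fun i hi => by rw [hGzero i hi, mul_zero]
    have hss : ∑ i ∈ s, w i * G i = 0 := by
      rw [hzero, add_zero] at hsplit; rw [hsplit]; exact hGsum
    rw [← hss, hs_def, Finset.sum_image (fun a _ b _ h => hmono.injective h)]
  -- per-term sign identity
  set Es : ℕ := ∑ i ∈ s, ((i : ℕ) + 1) with hEs_def
  have per_l : ∀ l : Fin k, (-1 : ℝ) ^ ((l : ℕ) + 1) * w (ι l) * Delta x (s.erase (ι l))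
      = (-1 : ℝ) ^ (Es + d) * (w (ι l) * G (ι l)) := by
    intro l
    have hmem : ι l ∈ s := Finset.mem_image_of_mem ι (Finset.mem_univ l)
    set t : Finset (Fin n) := s.erase (ι l) with ht
    have htc : tᶜ.card = d + 1 := by
      rw [ht, Finset.card_compl, Finset.card_erase_of_mem hmem, hcard, Fintype.card_fin]
      have : 0 < k := l.pos
      omega
    set sortedT := tᶜ.orderEmbOfFin htc with hsT
    have htcompl : tᶜ = insert (ι l) sᶜ := by rw [ht, Finset.compl_erase]
    have hιlmem : ι l ∈ tᶜ := by rw [htcompl]; exact Finset.mem_insert_self _ _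
    set r' : Fin (d + 1) := (tᶜ.orderIsoOfFin htc).symm ⟨ι l, hιlmem⟩ with hr'_def
    have hr' : sortedT r' = ι l := by
      rw [hsT, ← Finset.coe_orderIsoOfFin_apply]
      exact congrArg Subtype.val ((tᶜ.orderIsoOfFin htc).apply_symm_apply ⟨ι l, hιlmem⟩)
    have hcomp : ∀ u : Fin d, sortedT (r'.succAbove u) = sortedS u := by
      have hmemf : ∀ u : Fin d, sortedT (r'.succAbove u) ∈ sᶜ := by
        intro u
        have h1 : sortedT (r'.succAbove u) ∈ tᶜ := Finset.orderEmbOfFin_mem _ _ _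
        rw [htcompl, Finset.mem_insert] at h1
        rcases h1 with h1 | h1
        · exfalso
          have h2 : r'.succAbove u = r' := sortedT.injective (by rw [h1, hr'])
          exact Fin.succAbove_ne r' u h2
        · exact h1
      have hu := Finset.orderEmbOfFin_unique hsc hmemf
        (sortedT.strictMono.comp (Fin.strictMono_succAbove r'))
      exact fun u => congrFun hu u
    set e : Equiv.Perm (Fin (d + 1)) := (finRotate (d + 1)).trans (r'.cycleRange).symm
      with he_def
    set B : Matrix (Fin (d + 1)) (Fin (d + 1)) ℝ :=
      Matrix.of fun p q => eRow (p : ℕ) (x (sortedT q)) with hB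
    have hDelta : Delta x t = (-1 : ℝ) ^ (∑ i ∈ t, ((i : ℕ) + 1)) * B.det := delta_eq x t htc
    have hsub : A0.updateCol lastc (col (ι l)) = B.submatrix id e := by
      ext p q
      simp only [Matrix.submatrix_apply, id_eq]
      rcases lt_or_ge (q : ℕ) d with hq | hq
      · have hqne : q ≠ lastc := by
          rw [hlastc]
          exact Fin.ne_of_val_ne (by simpa using hq.ne)
        rw [Matrix.updateCol_ne hqne]
        have hq' : q = Fin.castSucc ⟨(q : ℕ), hq⟩ := by ext; simp
        have he : e q = r'.succAbove ⟨(q : ℕ), hq⟩ := by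
          rw [he_def]
          simp only [Equiv.trans_apply]
          rw [finRotate_succ_apply]
          have hq1 : q + 1 = (⟨(q : ℕ), hq⟩ : Fin d).succ := by
            ext
            rw [Fin.val_add_one_of_lt (by
              rw [Fin.lt_iff_val_lt_val, Fin.val_last]; exact hq)]
            simp
          rw [hq1]
          exact (Equiv.symm_apply_eq _).mpr (Fin.cycleRange_succAbove r' _).symm
        rw [he]
        show (if hq2 : (q : ℕ) < d then col (sortedS ⟨(q : ℕ), hq2⟩) p else 0)
            = eRow (p : ℕ) (x (sortedT (r'.succAbove ⟨(q : ℕ), hq⟩)))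
        rw [dif_pos hq, hcomp]
      · have hq' : q = lastc := by
          rw [hlastc]; ext
          have := q.isLt
          simp only [Fin.val_last]
          omega
        rw [hq', Matrix.updateCol_self]
        have he : e lastc = r' := by
          rw [he_def]
          simp only [Equiv.trans_apply, hlastc]
          rw [finRotate_last]
          exact (Equiv.symm_apply_eq _).mpr (Fin.cycleRange_self r').symm
        rw [he]
        show col (ι l) p = eRow (p : ℕ) (x (sortedT r'))
        rw [hr']
    have hGB : G (ι l) = ((Equiv.Perm.sign e : ℤ) : ℝ) * B.det := by
      show (A0.updateCol lastc (col (ι l))).det = _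
      rw [hsub, Matrix.det_permute' e B]
    have hsign : ((Equiv.Perm.sign e : ℤ) : ℝ) = (-1 : ℝ) ^ ((r' : ℕ) + d) := by
      have h1 : Equiv.Perm.sign e = (-1) ^ ((r' : ℕ) + d) := by
        have he2 : e = (r'.cycleRange)⁻¹ * (finRotate (d + 1)) := rfl
        rw [he2, map_mul, map_inv, Fin.sign_cycleRange, sign_finRotate, pow_add]
        simp
      rw [h1]
      push_cast
      ring
    have hpos : (ι l : ℕ) = (l : ℕ) + (r' : ℕ) := by
      have h1 : (tᶜ.filter (fun b => b < ι l)).card = (r' : ℕ) := by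
        have h := orderEmbOfFin_pos tᶜ htc r'
        rwa [← hsT, hr'] at h
      have h2 : tᶜ.filter (fun b => b < ι l) = sᶜ.filter (fun b => b < ι l) := by
        rw [htcompl, Finset.filter_insert, if_neg (lt_irrefl (ι l))]
      have h3 : (s.filter (fun b => b < ι l)).card = (l : ℕ) := by
        have h := orderEmbOfFin_pos s hcard l
        rwa [← hιeq l] at h
      have h4 : (Finset.univ.filter (fun b => b < ι l)).card = ((ι l : ℕ)) := by
        have huniv : Finset.univ.filter (fun b => b < ι l) = Finset.Iio (ι l) := by
          ext b; simp [Finset.mem_Iio]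
        rw [huniv, Fin.card_Iio]
      have h5 : (Finset.univ : Finset (Fin n)).filter (fun b => b < ι l)
          = s.filter (fun b => b < ι l) ∪ sᶜ.filter (fun b => b < ι l) := by
        rw [← Finset.filter_union, Finset.union_compl]
      have h6 : Disjoint (s.filter (fun b => b < ι l)) (sᶜ.filter (fun b => b < ι l)) :=
        Finset.disjoint_filter_filter disjoint_compl_right
      rw [h5, Finset.card_union_of_disjoint h6, h3, ← h2, h1] at h4
      omega
    have hEsplit : Es = ((ι l : ℕ) + 1) + ∑ i ∈ t, ((i : ℕ) + 1) := by
      rw [hEs_def, ht]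
      exact (Finset.add_sum_erase s (fun i => ((i : ℕ) + 1)) hmem).symm
    have hpow : (-1 : ℝ) ^ ((l : ℕ) + 1) * (-1 : ℝ) ^ (∑ i ∈ t, ((i : ℕ) + 1))
        = (-1 : ℝ) ^ (Es + d) * (-1 : ℝ) ^ ((r' : ℕ) + d) := by
      have hmod : (((l : ℕ) + 1) + ∑ i ∈ t, ((i : ℕ) + 1)) % 2
          = ((Es + d) + ((r' : ℕ) + d)) % 2 := by omega
      rw [← pow_add, ← pow_add, neg_one_pow_eq_pow_mod_two, hmod,
        ← neg_one_pow_eq_pow_mod_two]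
    rw [hDelta, hGB, hsign]
    calc (-1 : ℝ) ^ ((l : ℕ) + 1) * w (ι l)
          * ((-1 : ℝ) ^ (∑ i ∈ t, ((i : ℕ) + 1)) * B.det)
        = ((-1 : ℝ) ^ ((l : ℕ) + 1) * (-1 : ℝ) ^ (∑ i ∈ t, ((i : ℕ) + 1)))
          * (w (ι l) * B.det) := by ring
      _ = ((-1 : ℝ) ^ (Es + d) * (-1 : ℝ) ^ ((r' : ℕ) + d)) * (w (ι l) * B.det) := by
          rw [hpow]
      _ = (-1 : ℝ) ^ (Es + d) * (w (ι l) * ((-1 : ℝ) ^ ((r' : ℕ) + d) * B.det)) := by ring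
  calc ∑ l : Fin k, (-1 : ℝ) ^ ((l : ℕ) + 1) * w (ι l) * Delta x (s.erase (ι l))
      = ∑ l : Fin k, (-1 : ℝ) ^ (Es + d) * (w (ι l) * G (ι l)) :=
        Finset.sum_congr rfl (fun l _ => per_l l)
    _ = (-1 : ℝ) ^ (Es + d) * ∑ l : Fin k, w (ι l) * G (ι l) := by rw [Finset.mul_sum]
    _ = 0 := by rw [hsG, mul_zero]
/-- Let `n ≥ 2`, `1 ≤ k ≤ n−1`, and let `x` be a central configuration
in `ℝ^{n−k}` of dimension `n−k` for the potential `U_a` (`2a = c2` a nonzero integer),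
with masses `m`, total mass `M ≠ 0` and multiplier `λ ≠ 0`. Then for all strictly
increasing indices `i_1 < ⋯ < i_k` and every `j` not among them:
`∑_{l=1}^{k} (−1)^l m_{i_l} S_{i_l j} Δ_{i_1 … i_{l−1} i_{l+1} … i_k} = 0`. -/
theorem statement0 {n k : ℕ} (hn : 2 ≤ n) (hk1 : 1 ≤ k) (hk2 : k ≤ n - 1)
    (x : Fin n → EuclideanSpace ℝ (Fin (n - k))) (hinj : Function.Injective x)
    (m : Fin n → ℝ) (hM : ∑ i, m i ≠ 0)
    (c2 : ℤ) (hc2 : c2 ≠ 0) (lam : ℝ) (hlam : lam ≠ 0)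
    (hcc : IsCentralConfig c2 m lam x)
    (hdim : confDim x = n - k)
    (ι : Fin k → Fin n) (hmono : StrictMono ι)
    (j : Fin n) (hj : ∀ l, ι l ≠ j) :
    ∑ l : Fin k, (-1 : ℝ) ^ ((l : ℕ) + 1) * m (ι l) *
        Sij c2 lam (∑ i, m i) x (ι l) j *
        Delta x ((Finset.image ι Finset.univ).erase (ι l)) = 0 := by
  classical
  set M : ℝ := ∑ i, m i with hMdef
  set S : Fin n → ℝ := fun i => Sij c2 lam M x i j with hSdef
  set E : Finset (Fin n) := Finset.univ.erase j with hEdef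
  have hccj := hcc j
  rw [Finset.sdiff_singleton_eq_erase] at hccj
  have h2 : ∑ i ∈ E, ((lam / M) * m i) • (x i - x j)
      = (lam / M) • (∑ i, m i • x i) - lam • x j := by
    have hext : ∑ i ∈ E, ((lam / M) * m i) • (x i - x j)
        = ∑ i, ((lam / M) * m i) • (x i - x j) :=
      Finset.sum_erase _ (by simp)
    have hterm : ∀ i : Fin n, ((lam / M) * m i) • (x i - x j)
        = (lam / M) • (m i • x i) - ((lam / M) * m i) • x j := by
      intro i; rw [smul_sub, mul_smul]
    rw [hext, Finset.sum_congr rfl (fun i _ => hterm i), Finset.sum_sub_distrib,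
      ← Finset.smul_sum, ← Finset.sum_smul, ← Finset.mul_sum, ← hMdef,
      div_mul_cancel₀ lam hM]
  have hlam2 : lam • (x j - M⁻¹ • ∑ i, m i • x i)
      = lam • x j - (lam / M) • (∑ i, m i • x i) := by
    rw [smul_sub, smul_smul, div_eq_mul_inv]
  have hkey : ∑ i ∈ E, (m i * S i) • (x i - x j) = 0 := by
    have hterm : ∀ i : Fin n, (m i * S i) • (x i - x j)
        = (m i * dist (x i) (x j) ^ c2) • (x i - x j)
          - ((lam / M) * m i) • (x i - x j) := by
      intro i
      rw [← sub_smul]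
      congr 1
      simp only [hSdef, Sij]
      ring
    rw [Finset.sum_congr rfl (fun i _ => hterm i), Finset.sum_sub_distrib, h2]
    rw [hlam2] at hccj
    have hmain : ∑ i ∈ E, (m i * dist (x i) (x j) ^ c2) • (x i - x j)
        = (lam / M) • (∑ i, m i • x i) - lam • x j := by
      have h := eq_neg_of_add_eq_zero_left hccj
      rw [neg_sub] at h
      exact h
    rw [hmain, sub_self]
  have hveckey : ∑ i ∈ E, (m i * S i) • x i = (∑ i ∈ E, m i * S i) • x j := by
    have hterm : ∀ i : Fin n, (m i * S i) • (x i - x j)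
        = (m i * S i) • x i - (m i * S i) • x j := fun i => smul_sub _ _ _
    rw [Finset.sum_congr rfl (fun i _ => hterm i), Finset.sum_sub_distrib,
      sub_eq_zero] at hkey
    rw [hkey, Finset.sum_smul]
  set w : Fin n → ℝ := fun i => if i = j then -(∑ i' ∈ E, m i' * S i') else m i * S i
    with hwdef
  have hwE : ∀ i ∈ E, w i = m i * S i := fun i hi => if_neg (Finset.ne_of_mem_erase hi)
  have hw0 : ∑ i, w i = 0 := by
    rw [← Finset.add_sum_erase _ w (Finset.mem_univ j), ← hEdef,
      Finset.sum_congr rfl hwE]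
    simp [hwdef]
  have hwvec : ∑ i, w i • x i = 0 := by
    rw [← Finset.add_sum_erase _ (fun i => w i • x i) (Finset.mem_univ j), ← hEdef,
      Finset.sum_congr rfl (fun i hi => by rw [hwE i hi]), hveckey]
    simp [hwdef, neg_smul]
  have hwx : ∀ p : Fin (n - k), ∑ i, w i * x i p = 0 := by
    intro p
    have h := congrArg (EuclideanSpace.proj (𝕜 := ℝ) p) hwvec
    simpa [map_sum, smul_eq_mul] using h
  have haux := main_aux (by omega : n = k + (n - k)) x w hw0 hwx ι hmono
  refine Eq.trans (Finset.sum_congr rfl fun l _ => ?_) haux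
  rw [show w (ι l) = m (ι l) * S (ι l) from if_neg (hj l)]
  simp only [hSdef]
  ring
end

section
/- Let x be a central configuration in ℝ^{n−2} of dimension δ(x) = n−2 for the potential U_a (2a a nonzero integer), with nonzero masses m_1, …, m_n, total mass M ≠ 0 and multiplier λ. If (Δ_1, …, Δ_n) is a nonzero vector in Ker(X) and w_i = Δ_i/m_i for i = 1, …, n, then there exists a constant κ ≠ 0 such that S_{ij} = κ w_i w_j for all 1 ≤ i < j ≤ n; moreover, at least two of the w_i are nonzero. -/
/-!
Subtracting `λ/M` from every `r_ij^{2a}` turns the central configuration equations into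
`∑ i, m_i S_ij (x_i - x_j) = 0`: for each `j`, the column `(m_i S_ij)_i`, with its diagonal entry
chosen so that the entries sum to zero, lies in `Ker X`. Since `δ(x) = n - 2`, `Ker X` is the line
spanned by `Δ`, so `S_ij = t_j w_i`, and the symmetry of `S` makes `t` proportional to `w`.
Finally `S` cannot vanish off the diagonal: all mutual distances would then be equal, and for
`Δ ∈ Ker X` the row sums `∑ j, Δ_j r_ij²` do not depend on `i`, which forces `Δ = 0`.
-/

open Finset Module

section AffineRelations

variable {k E ι : Type*} [Field k] [AddCommGroup E] [Module k E] [Fintype ι]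

variable (k) in
/-- The kernel `Ker(X)` of the configuration matrix, whose columns are the `(1, x i)`. -/
def affineRelations (x : ι → E) : Submodule k (ι → k) :=
  LinearMap.ker (Fintype.linearCombination k fun i ↦ ((1 : k), x i))

variable {x : ι → E} {v : ι → k}

theorem mem_affineRelations :
    v ∈ affineRelations k x ↔ ∑ i, v i = 0 ∧ ∑ i, v i • x i = 0 := by
  simp [affineRelations, Fintype.linearCombination_apply, Prod.ext_iff, Prod.fst_sum, Prod.snd_sum]

theorem sub_single_sum_mem_affineRelations [DecidableEq ι] {c : ι → k} {j : ι}
    (h : ∑ i, c i • (x i - x j) = 0) : c - Pi.single j (∑ i, c i) ∈ affineRelations k x := by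
  simp only [smul_sub, sum_sub_distrib, ← sum_smul] at h
  rw [mem_affineRelations]
  simp [sum_sub_distrib, sub_smul, Pi.single_apply, ite_smul, h]

theorem finrank_affineRelations_add_finrank_vectorSpan_lt [Nonempty ι] :
    finrank k (affineRelations k x) + finrank k (vectorSpan k (Set.range x)) < Fintype.card ι := by
  classical
  obtain ⟨i₀⟩ := ‹Nonempty ι›
  set g := Fintype.linearCombination k fun i ↦ x i - x i₀
  have hrange : LinearMap.range g = vectorSpan k (Set.range x) := by
    simp [g, vectorSpan_range_eq_span_range_vsub_right k x i₀, vsub_eq_sub]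
  have hlt : affineRelations k x < LinearMap.ker g := by
    refine lt_of_le_of_ne (fun v hv ↦ ?_) fun heq ↦ ?_
    · obtain ⟨hsum, hcomb⟩ := mem_affineRelations.1 hv
      simp [g, Fintype.linearCombination_apply, smul_sub, ← sum_smul, hsum, hcomb]
    · have hsingle : Pi.single i₀ (1 : k) ∈ LinearMap.ker g := by
        simp [g, Fintype.linearCombination_apply_single]
      rw [← heq, mem_affineRelations] at hsingle
      simp at hsingle
  have hrank := LinearMap.finrank_range_add_finrank_ker g
  rw [hrange, Module.finrank_fintype_fun_eq_card] at hrank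
  have hker_lt := Submodule.finrank_lt_finrank_of_lt hlt
  omega

theorem affineRelations_eq_span_singleton
    (hdim : finrank k (vectorSpan k (Set.range x)) + 2 = Fintype.card ι)
    (hv : v ∈ affineRelations k x) (hv₀ : v ≠ 0) : affineRelations k x = k ∙ v := by
  have : Nonempty ι := by
    by_contra h
    exact hv₀ (funext fun i ↦ (h ⟨i⟩).elim)
  have hlt := finrank_affineRelations_add_finrank_vectorSpan_lt (k := k) (x := x)
  refine (Submodule.eq_of_le_of_finrank_le ?_ ?_).symm
  · simpa using hv
  · rw [finrank_span_singleton hv₀]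
    omega

end AffineRelations

section Euclidean

variable {E ι : Type*} [NormedAddCommGroup E] [InnerProductSpace ℝ E] [Fintype ι]
  {x : ι → E} {Δ : ι → ℝ}

theorem sum_mul_dist_sq_of_mem_affineRelations (hΔ : Δ ∈ affineRelations ℝ x) (i : ι) :
    ∑ j, Δ j * dist (x i) (x j) ^ 2 = ∑ j, Δ j * ‖x j‖ ^ 2 := by
  obtain ⟨hsum, hcomb⟩ := mem_affineRelations.1 hΔ
  have hinner : ∑ j, Δ j * inner ℝ (x i) (x j) = 0 := by
    simp [← real_inner_smul_right, ← inner_sum, hcomb]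
  simp only [dist_eq_norm, norm_sub_sq_real, mul_add, mul_sub, sum_add_distrib, sum_sub_distrib,
    ← sum_mul, hsum, zero_mul, zero_sub, mul_left_comm _ (2 : ℝ), ← mul_sum, hinner]
  ring

theorem eq_zero_of_mem_affineRelations_of_dist_eq (hΔ : Δ ∈ affineRelations ℝ x) {r : ℝ}
    (hr : r ≠ 0) (hdist : ∀ i j, i ≠ j → dist (x i) (x j) = r) : Δ = 0 := by
  classical
  have hsum := (mem_affineRelations.1 hΔ).1
  have hdist_sq : ∀ i j, dist (x i) (x j) ^ 2 = r ^ 2 - if i = j then r ^ 2 else 0 := by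
    intro i j
    by_cases hij : i = j
    · simp [hij]
    · simp [hij, hdist i j hij]
  have hrow : ∀ i, ∑ j, Δ j * dist (x i) (x j) ^ 2 = -(r ^ 2 * Δ i) := by
    intro i
    simp [hdist_sq, mul_sub, ← sum_mul, hsum, mul_comm]
  -- Pair the rows with `Δ`: by the previous lemma every row sum is the same constant.
  have hsq : r ^ 2 * ∑ i, Δ i ^ 2 = 0 :=
    calc r ^ 2 * ∑ i, Δ i ^ 2 = -∑ i, Δ i * ∑ j, Δ j * dist (x i) (x j) ^ 2 := by
          simp only [hrow, mul_sum, ← sum_neg_distrib]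
          exact sum_congr rfl fun i _ ↦ by ring
      _ = 0 := by simp [sum_mul_dist_sq_of_mem_affineRelations hΔ, ← sum_mul, hsum]
  funext i
  exact pow_eq_zero_iff two_ne_zero |>.1 ((sum_eq_zero_iff_of_nonneg fun i _ ↦ sq_nonneg (Δ i)).1
    ((mul_eq_zero.1 hsq).resolve_left (pow_ne_zero 2 hr)) i (mem_univ i))

end Euclidean

theorem exists_eq_mul_mul_of_eq_mul {K ι : Type*} [Field K] {S : ι → ι → K}
    (hS : ∀ i j, S i j = S j i) {t w : ι → K} (htw : ∀ i j, i ≠ j → S i j = t j * w i)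
    {a b : ι} (hab : a ≠ b) (hSab : S a b ≠ 0) :
    (∃ κ ≠ 0, ∀ i j, i ≠ j → S i j = κ * w i * w j) ∧ w a ≠ 0 ∧ w b ≠ 0 := by
  have hSba : S b a ≠ 0 := hS a b ▸ hSab
  rw [htw a b hab] at hSab
  rw [htw b a hab.symm] at hSba
  have htb : t b ≠ 0 := left_ne_zero_of_mul hSab
  have hwb : w b ≠ 0 := right_ne_zero_of_mul hSba
  -- Symmetry of `S` forces `t j * w b = t b * w j`, so `t` is proportional to `w`.
  have ht : ∀ j, t j = t b / w b * w j := by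
    intro j
    rcases eq_or_ne j b with rfl | hjb
    · field_simp
    · have h := htw j b hjb
      rw [hS, htw b j hjb.symm] at h
      rw [div_mul_eq_mul_div, eq_div_iff hwb]
      linear_combination h
  refine ⟨⟨t b / w b, div_ne_zero htb hwb, fun i j hij ↦ ?_⟩, right_ne_zero_of_mul hSab, hwb⟩
  rw [htw i j hij, ht j]
  ring

theorem Sij_comm {n d : ℕ} (c2 : ℤ) (lam M : ℝ) (x : Fin n → EuclideanSpace ℝ (Fin d))
    (i j : Fin n) : Sij c2 lam M x i j = Sij c2 lam M x j i := by
  rw [Sij, Sij, dist_comm]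

namespace IsCentralConfig

variable {n d : ℕ} {c2 : ℤ} {m : Fin n → ℝ} {lam : ℝ} {x : Fin n → EuclideanSpace ℝ (Fin d)}

theorem sum_mul_Sij_smul_sub (hcc : IsCentralConfig c2 m lam x) (hM : ∑ i, m i ≠ 0) (j : Fin n) :
    ∑ i, (m i * Sij c2 lam (∑ i, m i) x i j) • (x i - x j) = 0 := by
  set M := ∑ i, m i
  have hcenter : ∑ i, (m i * (lam / M)) • (x i - x j) = -lam • (x j - M⁻¹ • ∑ i, m i • x i) :=
    calc ∑ i, (m i * (lam / M)) • (x i - x j)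
        = (lam / M) • (∑ i, m i • x i - M • x j) := by
          simp only [smul_sum, smul_smul, mul_comm, smul_sub, sum_sub_distrib, sum_smul, M]
      _ = -lam • (x j - M⁻¹ • ∑ i, m i • x i) := by
          rw [smul_sub, smul_smul, div_mul_cancel₀ _ hM, div_eq_inv_mul, ← smul_smul]
          module
  simp only [Sij, mul_sub, sub_smul, sum_sub_distrib, hcenter, neg_smul, sub_neg_eq_add]
  rw [sum_eq_sum_sdiff_singleton_add (mem_univ j), sub_self, smul_zero, add_zero]
  exact hcc j

theorem exists_Sij_eq_mul (hcc : IsCentralConfig c2 m lam x) (hM : ∑ i, m i ≠ 0)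
    (hm : ∀ i, m i ≠ 0) {Δ : Fin n → ℝ} (hΔ : affineRelations ℝ x = ℝ ∙ Δ) :
    ∃ t : Fin n → ℝ, ∀ i j, i ≠ j → Sij c2 lam (∑ i, m i) x i j = t j * (Δ i / m i) := by
  classical
  -- The `j`-th column `(m i * S i j)ᵢ`, with the diagonal entry fixed to make the sum vanish.
  have hcol : ∀ j, ∃ t : ℝ, ∀ i, i ≠ j → m i * Sij c2 lam (∑ i, m i) x i j = t * Δ i := by
    intro j
    have hmem := sub_single_sum_mem_affineRelations (hcc.sum_mul_Sij_smul_sub hM j)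
    rw [hΔ, Submodule.mem_span_singleton] at hmem
    obtain ⟨t, ht⟩ := hmem
    exact ⟨t, fun i hij ↦ by simpa [hij] using (congrFun ht i).symm⟩
  choose t ht using hcol
  refine ⟨t, fun i j hij ↦ ?_⟩
  rw [mul_div_assoc', eq_div_iff (hm i), ← ht j i hij, mul_comm]

end IsCentralConfig

theorem exists_Sij_ne_zero {n d : ℕ} {c2 : ℤ} (hc2 : c2 ≠ 0) (lam M : ℝ)
    {x : Fin n → EuclideanSpace ℝ (Fin d)} (hinj : Function.Injective x) {Δ : Fin n → ℝ}
    (hΔ : Δ ∈ affineRelations ℝ x) (hΔ₀ : Δ ≠ 0) {a b : Fin n} (hab : a ≠ b) :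
    ∃ i j, i ≠ j ∧ Sij c2 lam M x i j ≠ 0 := by
  by_contra! hS
  have hdist : ∀ i j, i ≠ j → dist (x i) (x j) = dist (x a) (x b) := by
    intro i j hij
    refine (zpow_left_inj₀ dist_nonneg dist_nonneg hc2).1 ?_
    have hSij := hS i j hij
    have hSab := hS a b hab
    rw [Sij, sub_eq_zero] at hSij hSab
    rw [hSij, hSab]
  exact hΔ₀ (eq_zero_of_mem_affineRelations_of_dist_eq hΔ (dist_ne_zero.2 (hinj.ne hab)) hdist)

theorem statement1_general {n : ℕ} (hn : 2 ≤ n)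
    (x : Fin n → EuclideanSpace ℝ (Fin (n - 2))) (hinj : Function.Injective x)
    (m : Fin n → ℝ) (hm : ∀ i, m i ≠ 0) (hM : ∑ i, m i ≠ 0)
    (c2 : ℤ) (hc2 : c2 ≠ 0) (lam : ℝ)
    (hcc : IsCentralConfig c2 m lam x) (hdim : confDim x = n - 2)
    (Δ : Fin n → ℝ) (hΔ : Δ ≠ 0)
    (hker1 : ∑ i, Δ i = 0) (hker2 : ∑ i, Δ i • x i = 0)
    (w : Fin n → ℝ) (hw : ∀ i, w i = Δ i / m i) :
    (∃ κ : ℝ, κ ≠ 0 ∧ ∀ i j : Fin n, i < j →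
        Sij c2 lam (∑ i, m i) x i j = κ * w i * w j) ∧
    ∃ i j : Fin n, i ≠ j ∧ w i ≠ 0 ∧ w j ≠ 0 := by
  obtain rfl : w = fun i ↦ Δ i / m i := funext hw
  have hΔmem : Δ ∈ affineRelations ℝ x := mem_affineRelations.2 ⟨hker1, hker2⟩
  have hspan : affineRelations ℝ x = ℝ ∙ Δ := by
    refine affineRelations_eq_span_singleton ?_ hΔmem hΔ
    rw [← direction_affineSpan, ← confDim, hdim, Fintype.card_fin]
    omega
  obtain ⟨t, ht⟩ := hcc.exists_Sij_eq_mul hM hm hspan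
  have h01 : (⟨0, by omega⟩ : Fin n) ≠ ⟨1, by omega⟩ := by simp
  obtain ⟨a, b, hab, hSab⟩ := exists_Sij_ne_zero hc2 lam (∑ i, m i) hinj hΔmem hΔ h01
  obtain ⟨⟨κ, hκ, hS⟩, hwa, hwb⟩ := exists_eq_mul_mul_of_eq_mul (Sij_comm c2 lam _ x) ht hab hSab
  exact ⟨⟨κ, hκ, fun i j hij ↦ hS i j hij.ne⟩, a, b, hab, hwa, hwb⟩

/-- Let `x` be a central configuration in `ℝ^{n−2}` of dimension `n−2`
for `U_a` (`2a = c2` a nonzero integer), with nonzero masses, `M ≠ 0`, multiplier `λ ≠ 0`.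
If `(Δ_1,…,Δ_n)` is a nonzero vector in `Ker X` (i.e. `∑ Δ_j = 0` and `∑ Δ_j x_j = 0`)
and `w_i = Δ_i/m_i`, then there exists `κ ≠ 0` with `S_{ij} = κ w_i w_j` for all
`1 ≤ i < j ≤ n`; moreover at least two of the `w_i` are nonzero. -/
theorem statement1 {n : ℕ} (hn : 2 ≤ n)
    (x : Fin n → EuclideanSpace ℝ (Fin (n - 2))) (hinj : Function.Injective x)
    (m : Fin n → ℝ) (hm : ∀ i, m i ≠ 0) (hM : ∑ i, m i ≠ 0)
    (c2 : ℤ) (hc2 : c2 ≠ 0) (lam : ℝ) (hlam : lam ≠ 0)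
    (hcc : IsCentralConfig c2 m lam x) (hdim : confDim x = n - 2)
    (Δ : Fin n → ℝ) (hΔ : Δ ≠ 0)
    (hker1 : ∑ i, Δ i = 0) (hker2 : ∑ i, Δ i • x i = 0)
    (w : Fin n → ℝ) (hw : ∀ i, w i = Δ i / m i) :
    (∃ κ : ℝ, κ ≠ 0 ∧ ∀ i j : Fin n, i < j →
        Sij c2 lam (∑ i, m i) x i j = κ * w i * w j) ∧
    ∃ i j : Fin n, i ≠ j ∧ w i ≠ 0 ∧ w j ≠ 0 :=
  statement1_general hn x hinj m hm hM c2 hc2 lam hcc hdim Δ hΔ hker1 hker2 w hw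
end

section
/- Let x = (x_1, …, x_n) be a configuration in ℝ^{n−k}. Then the linear map T : Ker(X) → Ker(A(x)) defined by T(v_1, …, v_n) = (−∑_{i=1}^n ‖x_i‖² v_i, v_1, …, v_n) is a linear isomorphism; in particular Ker(A(x)) and Ker(X) are isomorphic. -/
/-!
Write `m = ∑ v_j x_j` for the first moment of the weights `v`. When `∑ v_j = 0`, expanding
`‖x_i - x_j‖²` turns the `i`-th row of `A(x) (a, v) = 0` into `a + ∑_j ‖x_j‖² v_j = 2 ⟪x_i, m⟫`.
So all `⟪x_i, m⟫` are equal, and then `‖m‖² = ∑_i v_i ⟪x_i, m⟫` vanishes because `∑ v_i = 0`.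
Hence `(a, v) ∈ Ker A(x)` exactly when `v ∈ Ker X` and `a = -∑_j ‖x_j‖² v_j`, i.e. `(a, v) = T v`.
-/

/-- The Cayley–Menger matrix of a configuration. -/
noncomputable def cayleyMenger {n d : ℕ} (x : Fin n → EuclideanSpace ℝ (Fin d)) :
    Matrix (Fin (n + 1)) (Fin (n + 1)) ℝ :=
  Matrix.of fun i j =>
    Fin.cases (Fin.cases 0 (fun _ => 1) j)
      (fun i' => Fin.cases 1 (fun j' => dist (x i') (x j') ^ 2) j) i

/-- The configuration matrix of `x : Fin n → ℝ^{n−k}`: the `n × n` matrix whose `j`-th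
column is `(1, x_j, 0, …, 0)`. -/
noncomputable def configMatrix {n k : ℕ} (x : Fin n → EuclideanSpace ℝ (Fin (n - k))) :
    Matrix (Fin n) (Fin n) ℝ :=
  Matrix.of fun i j =>
    if (i : ℕ) = 0 then 1
    else if hd : (i : ℕ) - 1 < n - k then x j ⟨(i : ℕ) - 1, hd⟩ else 0

/-- The matrix of the linear map `T : v ↦ (−∑ ‖x_i‖² v_i, v_1, …, v_n)`. -/
noncomputable def Tmat {n k : ℕ} (x : Fin n → EuclideanSpace ℝ (Fin (n - k))) :
    Matrix (Fin (n + 1)) (Fin n) ℝ :=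
  Matrix.of fun i j =>
    Fin.cases (-(‖x j‖ ^ 2)) (fun i' => if i' = j then 1 else 0) i

open scoped Matrix RealInnerProductSpace

section InnerProductSpace

variable {ι E : Type*} [Fintype ι] [NormedAddCommGroup E] [InnerProductSpace ℝ E]

theorem sum_dist_sq_mul_eq (x : ι → E) (v : ι → ℝ) (i : ι) :
    ∑ j, dist (x i) (x j) ^ 2 * v j =
      ‖x i‖ ^ 2 * ∑ j, v j - 2 * ⟪x i, ∑ j, v j • x j⟫ + ∑ j, ‖x j‖ ^ 2 * v j := by
  simp only [inner_sum, real_inner_smul_right, Finset.mul_sum, ← Finset.sum_sub_distrib,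
    ← Finset.sum_add_distrib, dist_eq_norm, norm_sub_sq_real]
  exact Finset.sum_congr rfl fun j _ => by ring

theorem sum_smul_eq_zero_of_inner_eq_const {x : ι → E} {v : ι → ℝ} (hv : ∑ j, v j = 0)
    {c : ℝ} (hc : ∀ i, ⟪x i, ∑ j, v j • x j⟫ = c) : ∑ j, v j • x j = 0 := by
  refine inner_self_eq_zero (𝕜 := ℝ) |>.mp ?_
  calc ⟪∑ j, v j • x j, ∑ j, v j • x j⟫ = ∑ i, v i * ⟪x i, ∑ j, v j • x j⟫ := by
        simp only [sum_inner (𝕜 := ℝ), real_inner_smul_left]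
    _ = 0 := by simp only [hc, ← Finset.sum_mul, hv, zero_mul]

theorem forall_add_sum_dist_sq_mul_eq_zero_iff [Nonempty ι] {x : ι → E} {v : ι → ℝ}
    (hv : ∑ j, v j = 0) (a : ℝ) :
    (∀ i, a + ∑ j, dist (x i) (x j) ^ 2 * v j = 0) ↔
      ∑ j, v j • x j = 0 ∧ a = -∑ j, ‖x j‖ ^ 2 * v j := by
  simp only [sum_dist_sq_mul_eq, hv, mul_zero, zero_sub]
  constructor
  · intro h
    have hm : ∑ j, v j • x j = 0 :=
      sum_smul_eq_zero_of_inner_eq_const hv (c := (a + ∑ j, ‖x j‖ ^ 2 * v j) / 2)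
        fun i => by linarith [h i]
    refine ⟨hm, ?_⟩
    have := h (Classical.arbitrary ι)
    rw [hm, inner_zero_right] at this
    linarith
  · rintro ⟨hm, rfl⟩ i
    rw [hm, inner_zero_right]
    ring

end InnerProductSpace

section Matrices

variable {n : ℕ}

theorem cayleyMenger_mulVec_cons_eq_zero_iff [NeZero n] {d : ℕ}
    (x : Fin n → EuclideanSpace ℝ (Fin d)) (a : ℝ) (v : Fin n → ℝ) :
    cayleyMenger x *ᵥ Fin.cons a v = 0 ↔
      (∑ j, v j = 0 ∧ ∑ j, v j • x j = 0) ∧ a = -∑ j, ‖x j‖ ^ 2 * v j := by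
  have hrows : cayleyMenger x *ᵥ Fin.cons a v = 0 ↔
      ∑ j, v j = 0 ∧ ∀ i, a + ∑ j, dist (x i) (x j) ^ 2 * v j = 0 := by
    simp only [funext_iff, Fin.forall_fin_succ, Pi.zero_apply]
    simp [cayleyMenger, Matrix.mulVec, dotProduct, Fin.sum_univ_succ]
  rw [hrows, and_assoc]
  exact and_congr_right fun hv => forall_add_sum_dist_sq_mul_eq_zero_iff hv a

theorem configMatrix_mulVec_eq_zero_iff {k : ℕ} (hk : 1 ≤ k)
    (x : Fin n → EuclideanSpace ℝ (Fin (n - k))) (v : Fin n → ℝ) :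
    configMatrix x *ᵥ v = 0 ↔ ∑ j, v j = 0 ∧ ∑ j, v j • x j = 0 := by
  have hrow : ∀ i : Fin n, (configMatrix x *ᵥ v) i = if (i : ℕ) = 0 then ∑ j, v j
      else if hd : (i : ℕ) - 1 < n - k then (∑ j, v j • x j) ⟨(i : ℕ) - 1, hd⟩ else 0 := by
    intro i
    split_ifs <;> simp_all [configMatrix, Matrix.mulVec, dotProduct, mul_comm]
  rcases Nat.eq_zero_or_pos n with rfl | hn
  · exact iff_of_true (Subsingleton.elim _ _) (by simp)
  constructor
  · intro h
    refine ⟨by simpa [hrow] using congrFun h ⟨0, hn⟩, ?_⟩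
    ext c
    have hc : (c : ℕ) + 1 < n := by omega
    simpa [hrow] using congrFun h ⟨c + 1, hc⟩
  · rintro ⟨hs, hm⟩
    ext i
    simp [hrow, hs, hm]

theorem Tmat_mulVec {k : ℕ} (x : Fin n → EuclideanSpace ℝ (Fin (n - k))) (v : Fin n → ℝ) :
    Tmat x *ᵥ v = Fin.cons (-∑ j, ‖x j‖ ^ 2 * v j) v := by
  ext i
  refine Fin.cases ?_ (fun i => ?_) i <;> simp [Tmat, Matrix.mulVec, dotProduct]

end Matrices

theorem statement5_general {n k : ℕ} (hk1 : 1 ≤ k) (hk2 : k ≤ n - 1)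
    (x : Fin n → EuclideanSpace ℝ (Fin (n - k))) :
    Set.BijOn (Tmat x).mulVec
      (↑(LinearMap.ker (configMatrix x).mulVecLin) : Set (Fin n → ℝ))
      (↑(LinearMap.ker (cayleyMenger x).mulVecLin) : Set (Fin (n + 1) → ℝ)) ∧
    Nonempty (LinearMap.ker (configMatrix x).mulVecLin ≃ₗ[ℝ]
      LinearMap.ker (cayleyMenger x).mulVecLin) := by
  have : NeZero n := ⟨by omega⟩
  have hker : ∀ a v, Fin.cons a v ∈ LinearMap.ker (cayleyMenger x).mulVecLin ↔
      v ∈ LinearMap.ker (configMatrix x).mulVecLin ∧ a = -∑ j, ‖x j‖ ^ 2 * v j := by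
    intro a v
    simp only [LinearMap.mem_ker, Matrix.mulVecLin_apply,
      cayleyMenger_mulVec_cons_eq_zero_iff, configMatrix_mulVec_eq_zero_iff hk1]
  have hbij : Set.BijOn (Tmat x).mulVec
      (↑(LinearMap.ker (configMatrix x).mulVecLin) : Set (Fin n → ℝ))
      (↑(LinearMap.ker (cayleyMenger x).mulVecLin) : Set (Fin (n + 1) → ℝ)) := by
    refine ⟨fun v hv => ?_, fun v _ w _ h => ?_, fun w hw => ?_⟩
    · rw [SetLike.mem_coe, Tmat_mulVec, hker]
      exact ⟨hv, rfl⟩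
    · simpa [Tmat_mulVec] using congrArg Fin.tail h
    · obtain ⟨a, v, rfl⟩ : ∃ a v, w = Fin.cons a v := ⟨_, _, (Fin.cons_self_tail w).symm⟩
      obtain ⟨hv, rfl⟩ := (hker a v).mp hw
      exact ⟨v, hv, Tmat_mulVec x v⟩
  exact ⟨hbij,
    ⟨LinearEquiv.ofBijective ((Tmat x).mulVecLin.restrict hbij.mapsTo) hbij.bijective⟩⟩

/-- The linear map `T(v) = (−∑ ‖x_i‖² v_i, v_1, …, v_n)` maps `Ker X`
bijectively onto `Ker A(x)`; in particular `Ker A(x)` and `Ker X` are isomorphic. -/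
theorem statement5 {n k : ℕ} (hk1 : 1 ≤ k) (hk2 : k ≤ n - 1)
    (x : Fin n → EuclideanSpace ℝ (Fin (n - k))) (hinj : Function.Injective x) :
    Set.BijOn (Tmat x).mulVec
      (↑(LinearMap.ker (configMatrix x).mulVecLin) : Set (Fin n → ℝ))
      (↑(LinearMap.ker (cayleyMenger x).mulVecLin) : Set (Fin (n + 1) → ℝ)) ∧
    Nonempty (LinearMap.ker (configMatrix x).mulVecLin ≃ₗ[ℝ]
      LinearMap.ker (cayleyMenger x).mulVecLin) :=
  statement5_general hk1 hk2 x
end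

section
/- Let x be a central configuration of dimension n−2. If (Δ_0, Δ_1, …, Δ_n) is a nonzero vector belonging to the kernel of the Cayley–Menger matrix A(x), then there exists a unique nonzero constant α such that F_{ij} = α Δ_i Δ_j for all 0 ≤ i, j ≤ n, where F_{ij} denotes the (i,j) cofactor of A(x). Moreover, at least two of the numbers Δ_1, …, Δ_n are nonzero. -/
/-! The tail `(u₁, …, uₙ)` of a vector `u` in the kernel of the Cayley–Menger matrix is an affine
dependency of the points: row `0` gives `∑ uⱼ = 0`, and expanding `‖xᵢ - xⱼ‖²` in the other rows
shows that `w = ∑ uⱼ xⱼ` has constant inner product with every `xᵢ`, hence with itself `⟪w, w⟫ = 0`.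
Since `u` is determined by its tail, the kernel has dimension at most
`n - 1 - δ(x)`, i.e. it is the line `ℝ Δ` when `δ(x) = n - 2`.

For a symmetric matrix with kernel `ℝ Δ`, every column of the adjugate lies in the kernel, and
symmetry of the adjugate forces `adj A = α Δ Δᵀ`. The constant is nonzero because the diagonal
cofactor at a coordinate with `Δᵢ ≠ 0` cannot vanish. Finally the tail of `Δ` is nonzero and sums
to `0`, so it has two nonzero entries. -/

open Matrix
open scoped InnerProductSpace

section CayleyMenger

variable {n d : ℕ} (x : Fin n → EuclideanSpace ℝ (Fin d))

@[simp] lemma cayleyMenger_zero_zero : cayleyMenger x 0 0 = 0 := rfl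
@[simp] lemma cayleyMenger_zero_succ (j : Fin n) : cayleyMenger x 0 j.succ = 1 := rfl
@[simp] lemma cayleyMenger_succ_zero (i : Fin n) : cayleyMenger x i.succ 0 = 1 := rfl
@[simp] lemma cayleyMenger_succ_succ (i j : Fin n) :
    cayleyMenger x i.succ j.succ = dist (x i) (x j) ^ 2 := rfl

lemma cayleyMenger_isSymm : (cayleyMenger x).IsSymm := by
  refine IsSymm.ext fun i j => ?_
  cases i using Fin.cases <;> cases j using Fin.cases <;> simp [dist_comm]

lemma cayleyMenger_mulVec_zero (u : Fin (n + 1) → ℝ) :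
    (cayleyMenger x *ᵥ u) 0 = ∑ j : Fin n, u j.succ := by
  simp [mulVec, dotProduct, Fin.sum_univ_succ]

lemma cayleyMenger_mulVec_succ (u : Fin (n + 1) → ℝ) (i : Fin n) :
    (cayleyMenger x *ᵥ u) i.succ = u 0 + ∑ j, dist (x i) (x j) ^ 2 * u j.succ := by
  simp [mulVec, dotProduct, Fin.sum_univ_succ]

variable {x}

lemma sum_smul_eq_zero_of_cayleyMenger_mulVec_eq_zero {u : Fin (n + 1) → ℝ}
    (hu : cayleyMenger x *ᵥ u = 0) : ∑ j : Fin n, u j.succ • x j = 0 := by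
  set w := ∑ j : Fin n, u j.succ • x j
  have hsum : ∑ j : Fin n, u j.succ = 0 := by rw [← cayleyMenger_mulVec_zero, hu, Pi.zero_apply]
  -- expanding `‖x i - x j‖²` in row `i` shows that `⟪x i, w⟫` does not depend on `i`
  have hinner : ∀ i, 2 * ⟪x i, w⟫_ℝ = u 0 + ∑ j : Fin n, u j.succ * ‖x j‖ ^ 2 := by
    intro i
    have hexp : ∀ j, dist (x i) (x j) ^ 2 * u j.succ =
        ‖x i‖ ^ 2 * u j.succ + u j.succ * ‖x j‖ ^ 2 - 2 * (u j.succ * ⟪x i, x j⟫_ℝ) := fun j => by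
      rw [dist_eq_norm, norm_sub_sq_real]; ring
    have hrow := cayleyMenger_mulVec_succ x u i
    rw [hu, Pi.zero_apply, Finset.sum_congr rfl fun j _ => hexp j] at hrow
    simp only [Finset.sum_sub_distrib, Finset.sum_add_distrib, ← Finset.mul_sum, hsum,
      mul_zero, zero_add] at hrow
    have hw : ⟪x i, w⟫_ℝ = ∑ j : Fin n, u j.succ * ⟪x i, x j⟫_ℝ := by
      simp only [w, inner_sum, real_inner_smul_right]
    linarith
  have hww : ⟪w, w⟫_ℝ = 0 := by
    calc ⟪w, w⟫_ℝ = ∑ j : Fin n, u j.succ * ((u 0 + ∑ j : Fin n, u j.succ * ‖x j‖ ^ 2) / 2) := by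
          simp only [w, sum_inner, real_inner_smul_left]
          refine Finset.sum_congr rfl fun j _ => ?_
          rw [← hinner j]; ring
      _ = 0 := by rw [← Finset.sum_mul, hsum, zero_mul]
  exact inner_self_eq_zero.mp hww

lemma eq_zero_of_cayleyMenger_mulVec_eq_zero_of_tail_eq_zero (hn : 1 ≤ n)
    {u : Fin (n + 1) → ℝ} (hu : cayleyMenger x *ᵥ u = 0) (htail : Fin.tail u = 0) : u = 0 := by
  have htail' : ∀ j : Fin n, u j.succ = 0 := congrFun htail
  have hrow := cayleyMenger_mulVec_succ x u ⟨0, hn⟩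
  simp only [hu, htail', Pi.zero_apply, mul_zero, Finset.sum_const_zero, add_zero] at hrow
  ext k
  cases k using Fin.cases
  · exact hrow.symm
  · exact htail' _

end CayleyMenger

section AffineDependencies

variable {n d : ℕ} (x : Fin n → EuclideanSpace ℝ (Fin d))

def affineDependencies : Submodule ℝ (Fin n → ℝ) :=
  LinearMap.ker (Fintype.linearCombination ℝ fun _ => (1 : ℝ)) ⊓
    LinearMap.ker (Fintype.linearCombination ℝ x)

lemma mem_affineDependencies {v : Fin n → ℝ} :
    v ∈ affineDependencies x ↔ ∑ i, v i = 0 ∧ ∑ i, v i • x i = 0 := by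
  simp [affineDependencies, Fintype.linearCombination_apply]

lemma finrank_affineDependencies_add_confDim_lt (hn : 1 ≤ n) :
    Module.finrank ℝ (affineDependencies x) + confDim x < n := by
  let i₀ : Fin n := ⟨0, hn⟩
  let B := Fintype.linearCombination ℝ fun i => x i -ᵥ x i₀
  have hrange : Module.finrank ℝ (LinearMap.range B) = confDim x := by
    rw [Fintype.range_linearCombination, confDim, direction_affineSpan,
      vectorSpan_range_eq_span_range_vsub_right ℝ x i₀]
  have hle : affineDependencies x ≤ LinearMap.ker B := fun v hv => by
    obtain ⟨hsum, hcomb⟩ := (mem_affineDependencies x).mp hv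
    simp [B, Fintype.linearCombination_apply, smul_sub, Finset.sum_sub_distrib, hcomb,
      ← Finset.sum_smul, hsum]
  have hsingle_mem : Pi.single i₀ 1 ∈ LinearMap.ker B := by
    simp [B, Fintype.linearCombination_apply_single]
  have hsingle_not_mem : Pi.single i₀ 1 ∉ affineDependencies x := by
    simp [mem_affineDependencies]
  have hlt := Submodule.finrank_lt_finrank_of_lt
    (SetLike.lt_iff_le_and_exists.mpr ⟨hle, _, hsingle_mem, hsingle_not_mem⟩)
  have hrank := LinearMap.finrank_range_add_finrank_ker B
  rw [hrange, Module.finrank_fin_fun] at hrank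
  omega

end AffineDependencies

section KernelOfCayleyMenger

variable {n d : ℕ} {x : Fin n → EuclideanSpace ℝ (Fin d)}

lemma tail_mem_affineDependencies {u : Fin (n + 1) → ℝ} (hu : cayleyMenger x *ᵥ u = 0) :
    Fin.tail u ∈ affineDependencies x :=
  (mem_affineDependencies x).mpr
    ⟨(cayleyMenger_mulVec_zero x u).symm.trans (congrFun hu 0),
      sum_smul_eq_zero_of_cayleyMenger_mulVec_eq_zero hu⟩

lemma finrank_ker_cayleyMenger_le (hn : 1 ≤ n) :
    Module.finrank ℝ (LinearMap.ker (toLin' (cayleyMenger x))) ≤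
      Module.finrank ℝ (affineDependencies x) := by
  let tail := (LinearMap.funLeft ℝ ℝ Fin.succ).restrict (p := LinearMap.ker (toLin' (cayleyMenger x)))
    (q := affineDependencies x) fun u hu =>
      tail_mem_affineDependencies (by rwa [LinearMap.mem_ker, toLin'_apply] at hu)
  refine LinearMap.finrank_le_finrank_of_injective (f := tail) fun u v huv => ?_
  have hu := u.2
  have hv := v.2
  rw [LinearMap.mem_ker, toLin'_apply] at hu hv
  have hsub := eq_zero_of_cayleyMenger_mulVec_eq_zero_of_tail_eq_zero hn
    (u := u.1 - v.1) (by rw [mulVec_sub, hu, hv, sub_zero])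
    (funext fun j => sub_eq_zero.mpr (congrFun (congrArg Subtype.val huv) j))
  exact Subtype.ext (sub_eq_zero.mp hsub)

lemma exists_eq_smul_of_cayleyMenger_mulVec_eq_zero (hn : 2 ≤ n) (hdim : confDim x = n - 2)
    {Δ : Fin (n + 1) → ℝ} (hΔ : Δ ≠ 0) (hker : cayleyMenger x *ᵥ Δ = 0)
    {u : Fin (n + 1) → ℝ} (hu : cayleyMenger x *ᵥ u = 0) : ∃ t : ℝ, u = t • Δ := by
  let K := LinearMap.ker (toLin' (cayleyMenger x))
  have mem_K {v} (hv : cayleyMenger x *ᵥ v = 0) : v ∈ K := by rwa [LinearMap.mem_ker, toLin'_apply]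
  have hΔ' : (⟨Δ, mem_K hker⟩ : K) ≠ 0 := by simpa [Subtype.ext_iff] using hΔ
  have hone : Module.finrank ℝ K = 1 := by
    have : Module.finrank ℝ K ≤ Module.finrank ℝ (affineDependencies x) :=
      finrank_ker_cayleyMenger_le (by omega)
    have := finrank_affineDependencies_add_confDim_lt x (by omega)
    have := (Module.finrank_pos_iff_exists_ne_zero (R := ℝ)).mpr ⟨_, hΔ'⟩
    omega
  obtain ⟨t, ht⟩ := (finrank_eq_one_iff_of_nonzero' _ hΔ').mp hone ⟨u, mem_K hu⟩
  exact ⟨t, (congrArg Subtype.val ht).symm⟩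

end KernelOfCayleyMenger

namespace Matrix

variable {ι K : Type*} [Fintype ι] [DecidableEq ι] [Field K] {A : Matrix ι ι K} {Δ : ι → K}

lemma mulVec_adjugate_col_eq_zero (hdet : A.det = 0) (j : ι) :
    A *ᵥ (fun i => A.adjugate i j) = 0 := by
  ext i
  have h := congrFun (congrFun (mul_adjugate A) i) j
  rwa [hdet, zero_smul] at h

lemma IsSymm.adjugate_apply_self_ne_zero (hA : A.IsSymm) (hker : A *ᵥ Δ = 0)
    (hspan : ∀ u, A *ᵥ u = 0 → ∃ t : K, u = t • Δ) {i : ι} (hi : Δ i ≠ 0) :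
    A.adjugate i i ≠ 0 := by
  rw [adjugate_apply]
  intro hdet
  -- `w` killed by `A` with row `i` replaced by `eᵢ` is killed by `A` itself: the missing row
  -- `(A *ᵥ w) i` is forced to vanish by the left null vector `Δ`, as `Δ i ≠ 0`
  obtain ⟨w, hw0, hw⟩ := exists_mulVec_eq_zero_iff.mpr hdet
  have hwi : w i = 0 := by
    simpa [mulVec, updateRow_self] using congrFun hw i
  have hrows : ∀ j, j ≠ i → (A *ᵥ w) j = 0 := fun j hj => by
    simpa [mulVec, updateRow_ne hj] using congrFun hw j
  have hAwi : (A *ᵥ w) i = 0 := by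
    have hleft : Δ ᵥ* A = 0 := by rw [← hA.eq, vecMul_transpose, hker]
    have h : Δ ⬝ᵥ (A *ᵥ w) = Δ i * (A *ᵥ w) i :=
      Finset.sum_eq_single i (fun j _ hj => by rw [hrows j hj, mul_zero]) (by simp)
    rw [dotProduct_mulVec, hleft, zero_dotProduct] at h
    exact (mul_eq_zero.mp h.symm).resolve_left hi
  have hAw : A *ᵥ w = 0 := funext fun j => by
    by_cases hj : j = i
    · rw [hj, hAwi, Pi.zero_apply]
    · rw [hrows j hj, Pi.zero_apply]
  obtain ⟨t, rfl⟩ := hspan w hAw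
  have ht : t = 0 := by simpa [hi] using hwi
  exact hw0 (by rw [ht, zero_smul])

lemma IsSymm.exists_adjugate_eq_mul (hA : A.IsSymm) (hΔ : Δ ≠ 0) (hker : A *ᵥ Δ = 0)
    (hspan : ∀ u, A *ᵥ u = 0 → ∃ t : K, u = t • Δ) :
    ∃ α ≠ 0, ∀ i j, A.adjugate j i = α * Δ i * Δ j := by
  obtain ⟨i₀, hi₀⟩ := Function.ne_iff.mp hΔ
  have hdet : A.det = 0 := exists_mulVec_eq_zero_iff.mp ⟨Δ, hΔ, hker⟩
  choose t ht using fun j => hspan _ (mulVec_adjugate_col_eq_zero hdet j)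
  have hcol : ∀ i j, A.adjugate i j = t j * Δ i := fun i j => congrFun (ht j) i
  have hsymm : ∀ j, t j * Δ i₀ = t i₀ * Δ j := fun j => by
    rw [← hcol, ← hcol, hA.adjugate.apply]
  have hα : t i₀ ≠ 0 := fun h => hA.adjugate_apply_self_ne_zero hker hspan hi₀ (by
    rw [hcol, h, zero_mul])
  refine ⟨t i₀ / Δ i₀, div_ne_zero hα hi₀, fun i j => ?_⟩
  rw [hcol, eq_div_iff hi₀ |>.mpr (hsymm i)]
  ring

end Matrix

lemma Fintype.exists_ne_apply_ne_zero_of_sum_eq_zero {ι M : Type*} [Fintype ι] [AddCommMonoid M]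
    {v : ι → M} (hv : v ≠ 0) (hsum : ∑ i, v i = 0) : ∃ i j, i ≠ j ∧ v i ≠ 0 ∧ v j ≠ 0 := by
  obtain ⟨i, hi⟩ := Function.ne_iff.mp hv
  by_contra! hcon
  have hsum_eq : ∑ j, v j = v i :=
    Finset.sum_eq_single i (fun j _ hj => hcon i j (Ne.symm hj) hi) (by simp)
  exact hi (hsum_eq.symm.trans hsum)

theorem statement7_general {n d : ℕ} (hn : 2 ≤ n)
    (x : Fin n → EuclideanSpace ℝ (Fin d))
    (hdim : confDim x = n - 2)
    (Δ : Fin (n + 1) → ℝ) (hΔ : Δ ≠ 0)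
    (hker : (cayleyMenger x).mulVec Δ = 0) :
    (∃! α : ℝ, α ≠ 0 ∧ ∀ i j : Fin (n + 1),
        (cayleyMenger x).adjugate j i = α * Δ i * Δ j) ∧
    ∃ i j : Fin n, i ≠ j ∧ Δ i.succ ≠ 0 ∧ Δ j.succ ≠ 0 := by
  obtain ⟨α, hα, hadj⟩ := (cayleyMenger_isSymm x).exists_adjugate_eq_mul hΔ hker
    fun _ hu => exists_eq_smul_of_cayleyMenger_mulVec_eq_zero hn hdim hΔ hker hu
  obtain ⟨i, hi⟩ := Function.ne_iff.mp hΔ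
  refine ⟨⟨α, ⟨hα, hadj⟩, fun β ⟨_, hβ⟩ => ?_⟩, ?_⟩
  · exact mul_right_cancel₀ hi (mul_right_cancel₀ hi ((hβ i i).symm.trans (hadj i i)))
  · have htail : Fin.tail Δ ≠ 0 := fun h =>
      hΔ (eq_zero_of_cayleyMenger_mulVec_eq_zero_of_tail_eq_zero (by omega) hker h)
    exact Fintype.exists_ne_apply_ne_zero_of_sum_eq_zero htail
      ((mem_affineDependencies x).mp (tail_mem_affineDependencies hker)).1

/-- Let `x` be a central configuration of dimension `n−2`. If
`(Δ_0, Δ_1, …, Δ_n)` is a nonzero vector in the kernel of `A(x)`, then there exists a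
unique nonzero constant `α` such that the `(i,j)` cofactor of `A(x)` (i.e. the `(j,i)`
entry of the adjugate) equals `α Δ_i Δ_j` for all `0 ≤ i, j ≤ n`. Moreover at least two
of `Δ_1, …, Δ_n` are nonzero. -/
theorem statement7 {n d : ℕ} (hn : 2 ≤ n)
    (x : Fin n → EuclideanSpace ℝ (Fin d)) (hinj : Function.Injective x)
    (m : Fin n → ℝ) (hM : ∑ i, m i ≠ 0) (c2 : ℤ) (hc2 : c2 ≠ 0)
    (lam : ℝ) (hlam : lam ≠ 0) (hcc : IsCentralConfig c2 m lam x)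
    (hdim : confDim x = n - 2)
    (Δ : Fin (n + 1) → ℝ) (hΔ : Δ ≠ 0)
    (hker : (cayleyMenger x).mulVec Δ = 0) :
    (∃! α : ℝ, α ≠ 0 ∧ ∀ i j : Fin (n + 1),
        (cayleyMenger x).adjugate j i = α * Δ i * Δ j) ∧
    ∃ i j : Fin n, i ≠ j ∧ Δ i.succ ≠ 0 ∧ Δ j.succ ≠ 0 :=
  statement7_general hn x hdim Δ hΔ hker
end

section
/- Let a be a negative semi-integer (2a ∈ ℤ, a < 0) and let P = (r, z, Δ_0, m) ∈ ℂ^{q+2n+1} be a point such that r_{ij} ≠ 0 for all 1 ≤ i < j ≤ n, g^a_{ij}(P) = r_{ij}^{−2a}(z_i z_j + 1) − 1 = 0 for all 1 ≤ i < j ≤ n, and Ψ^a_{i_0}(P) ≠ 0 for some index i_0. Then the (q+1) × (q+n) Jacobian matrix of the polynomials (g^a_{ij})_{1≤i<j≤n} and F with respect to the variables (R_{kl})_{1≤k<l≤n}, Z_1, …, Z_n, evaluated at P, has maximal rank q+1; in particular it possesses a nonsingular square submatrix of order q+1. -/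
/-- Index type for the mutual-distance variables `R_{ij}`, `1 ≤ i < j ≤ n`. -/
abbrev PairIdx (n : ℕ) := {p : Fin n × Fin n // p.1 < p.2}

/-- The polynomial `R_{ij}` (for an unordered pair `{i,j}`; junk value `0` if `i = j`). -/
noncomputable def Rvar {n : ℕ} (i j : Fin n) : MvPolynomial (PairIdx n) ℂ :=
  if h : i < j then MvPolynomial.X ⟨(i, j), h⟩
  else if h' : j < i then MvPolynomial.X ⟨(j, i), h'⟩ else 0

/-- The polynomial Cayley–Menger matrix `A(R)` over `ℂ[R_{12}, …, R_{(n−1)n}]`. -/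
noncomputable def cmPolyMatrix (n : ℕ) :
    Matrix (Fin (n + 1)) (Fin (n + 1)) (MvPolynomial (PairIdx n) ℂ) :=
  Matrix.of fun i j =>
    Fin.cases (Fin.cases 0 (fun _ => 1) j)
      (fun i' => Fin.cases 1 (fun j' => Rvar i' j' ^ 2) j) i

/-- The Cayley–Menger determinant polynomial `F = det A(R)`. -/
noncomputable def Fpoly (n : ℕ) : MvPolynomial (PairIdx n) ℂ := (cmPolyMatrix n).det

/-- `∂F/∂R_{ij}` for an unordered pair `{i,j}` (junk value `0` if `i = j`). -/
noncomputable def dF {n : ℕ} (i j : Fin n) : MvPolynomial (PairIdx n) ℂ :=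
  if h : i < j then MvPolynomial.pderiv (⟨(i, j), h⟩ : PairIdx n) (Fpoly n)
  else if h' : j < i then MvPolynomial.pderiv (⟨(j, i), h'⟩ : PairIdx n) (Fpoly n) else 0

/-- `(∂F/∂R_{ij})` evaluated at `r`. -/
noncomputable def evalDF {n : ℕ} (r : PairIdx n → ℂ) (i j : Fin n) : ℂ :=
  MvPolynomial.eval r (dF i j)

/-- `r_{ij}` as a symmetric function of the coordinates indexed by ordered pairs. -/
noncomputable def rC {n : ℕ} (r : PairIdx n → ℂ) (i j : Fin n) : ℂ :=
  if h : i < j then r ⟨(i, j), h⟩ else if h' : j < i then r ⟨(j, i), h'⟩ else 0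

/-- The numeric Cayley–Menger matrix `A(r²)` of the numbers `r_{ij}`. -/
noncomputable def cmOf {n : ℕ} (r : PairIdx n → ℂ) :
    Matrix (Fin (n + 1)) (Fin (n + 1)) ℂ :=
  Matrix.of fun i j =>
    Fin.cases (Fin.cases 0 (fun _ => 1) j)
      (fun i' => Fin.cases 1 (fun j' => rC r i' j' ^ 2) j) i

/-- `Ψ^a_i` evaluated at a point (with `c2 = 2a`): for `a < 0`,
`∑_{j≠i} r_{ij}^{−2a+1} (∂F/∂R_{ij})(r) z_j`; for `a > 0`,
`∑_{j≠i} (∏_{(k,l)≠(i,j)} r_{kl}^{2a−1}) (∂F/∂R_{ij})(r) z_j`. -/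
noncomputable def Psi {n : ℕ} (c2 : ℤ) (r : PairIdx n → ℂ) (z : Fin n → ℂ) (i : Fin n) : ℂ :=
  if c2 < 0 then
    ∑ j ∈ Finset.univ \ {i}, rC r i j ^ (1 - c2).toNat * evalDF r i j * z j
  else
    ∑ j ∈ Finset.univ \ {i},
      (∏ p ∈ Finset.univ.filter
          (fun p : PairIdx n => ¬((p.1.1 = i ∧ p.1.2 = j) ∨ (p.1.1 = j ∧ p.1.2 = i))),
        r p ^ (c2 - 1).toNat) * evalDF r i j * z j

/-- The coordinates of the affine space `ℂ^{q+2n+1}`: `R`-coordinates, `Z`-coordinates,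
the coordinate `Δ`, and `M`-coordinates. -/
abbrev TVar (n : ℕ) := PairIdx n ⊕ (Fin n ⊕ (Unit ⊕ Fin n))

/-- A point of `ℂ^{q+2n+1}`. -/
abbrev Pt (n : ℕ) := TVar n → ℂ

def rPart {n : ℕ} (P : Pt n) : PairIdx n → ℂ := fun p => P (Sum.inl p)
def zPart {n : ℕ} (P : Pt n) : Fin n → ℂ := fun i => P (Sum.inr (Sum.inl i))
def dPart {n : ℕ} (P : Pt n) : ℂ := P (Sum.inr (Sum.inr (Sum.inl ())))
def mPart {n : ℕ} (P : Pt n) : Fin n → ℂ := fun i => P (Sum.inr (Sum.inr (Sum.inr i)))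

/-- `g^a_{ij}` evaluated at a point: `R_{ij}^{2a} − 1 − Z_i Z_j` if `a > 0`, and
`R_{ij}^{−2a}(Z_i Z_j + 1) − 1` if `a < 0` (with `c2 = 2a`). -/
noncomputable def gEval {n : ℕ} (c2 : ℤ) (P : Pt n) (p : PairIdx n) : ℂ :=
  if 0 < c2 then rPart P p ^ c2.toNat - 1 - zPart P p.1.1 * zPart P p.1.2
  else rPart P p ^ (-c2).toNat * (zPart P p.1.1 * zPart P p.1.2 + 1) - 1

/-- `Γ_l` evaluated at a point: `Γ_0 = ∑ M_j Z_j` and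
`Γ_l = Δ + ∑ M_j Z_j R_{jl}²` for `l = 1, …, n`. -/
noncomputable def GammaEval {n : ℕ} (P : Pt n) (l : Fin (n + 1)) : ℂ :=
  Fin.cases (∑ j, mPart P j * zPart P j)
    (fun l' => dPart P + ∑ j, mPart P j * zPart P j * rC (rPart P) j l' ^ 2) l

/-- The algebraic set `Ṽ^a`: common zero set of the `g^a_{ij}`, `F`, and the `Γ_l`. -/
noncomputable def Vtilde (n : ℕ) (c2 : ℤ) : Set (Pt n) :=
  {P | (∀ p, gEval c2 P p = 0) ∧ (cmOf (rPart P)).det = 0 ∧ ∀ l, GammaEval P l = 0}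

/-- `W_1 = {∏_{i<j} R_{ij} = 0}`. -/
noncomputable def W1 (n : ℕ) : Set (Pt n) := {P | ∏ p, rPart P p = 0}

/-- `W_2 = {F_{ij} = 0 for all 0 ≤ i, j ≤ n}` (the `(i,j)` cofactor of the Cayley–Menger
matrix is the `(j,i)` entry of its adjugate). -/
noncomputable def W2 (n : ℕ) : Set (Pt n) :=
  {P | ∀ i j : Fin (n + 1), (cmOf (rPart P)).adjugate j i = 0}

/-- `W_3^a = {Ψ^a_1 = ⋯ = Ψ^a_n = 0}`. -/
noncomputable def W3 (n : ℕ) (c2 : ℤ) : Set (Pt n) :=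
  {P | ∀ i, Psi c2 (rPart P) (zPart P) i = 0}

/-- The quasi-affine set `V^a = Ṽ^a \ (W_1 ∪ W_2 ∪ W_3^a)`. -/
noncomputable def Vset (n : ℕ) (c2 : ℤ) : Set (Pt n) :=
  Vtilde n c2 \ (W1 n ∪ W2 n ∪ W3 n c2)

/-- Variables for the Jacobian of Statement 12: the `R_{ij}` and the `Z_i`. -/
abbrev JVar (n : ℕ) := PairIdx n ⊕ Fin n

/-- The polynomial `g^a_{ij} = R_{ij}^{−2a}(Z_i Z_j + 1) − 1` (case `a < 0`, `c2 = 2a`),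
as a polynomial in the variables `R_{kl}, Z_1, …, Z_n`. -/
noncomputable def gPolyJ {n : ℕ} (c2 : ℤ) (p : PairIdx n) : MvPolynomial (JVar n) ℂ :=
  MvPolynomial.X (Sum.inl p) ^ (-c2).toNat *
    (MvPolynomial.X (Sum.inr p.1.1) * MvPolynomial.X (Sum.inr p.1.2) + 1) - 1

/-- `F` regarded as a polynomial in the variables `R_{kl}, Z_1, …, Z_n`. -/
noncomputable def FpolyJ (n : ℕ) : MvPolynomial (JVar n) ℂ :=
  MvPolynomial.rename Sum.inl (Fpoly n)

/-- The Jacobian matrix of the polynomials `(g^a_{ij})_{i<j}` and `F` with respect to the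
variables `(R_{kl})_{k<l}, Z_1, …, Z_n`, evaluated at a point `P`. -/
noncomputable def jacMat {n : ℕ} (c2 : ℤ) (P : JVar n → ℂ) :
    Matrix (PairIdx n ⊕ Unit) (JVar n) ℂ :=
  Matrix.of fun row v =>
    MvPolynomial.eval P
      (MvPolynomial.pderiv v (Sum.elim (fun p => gPolyJ c2 p) (fun _ => FpolyJ n) row))

/-! Take the columns of all `R_{ij}` together with the column of `Z_{i₀}`. The resulting square
submatrix has block shape `[[D, b], [∇F, 0]]` with `D` diagonal; on `g^a = 0` its entries are
`-2a / r_{ij} ≠ 0`, and the Schur complement of `D` is `-Ψ^a_{i₀}(P) / (-2a)`. Hence this minor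
is nonzero, which gives both the rank and the nonsingular submatrix. -/

open MvPolynomial Matrix Finset

lemma sum_pairs_incident {α M : Type*} [LinearOrder α] [Fintype α] [AddCommMonoid M]
    (f : α → α → M) (i : α) :
    ∑ p : {p : α × α // p.1 < p.2},
        ((if p.1.1 = i then f p.1.1 p.1.2 else 0) + (if p.1.2 = i then f p.1.2 p.1.1 else 0)) =
      ∑ j ∈ univ \ {i}, f i j := by
  have split (a b : α) : (if a < b then
      (if a = i then f a b else 0) + (if b = i then f b a else 0) else 0) =
      (if a = i then (if i < b then f i b else 0) else 0) +
        (if b = i then (if a < i then f i a else 0) else 0) := by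
    split_ifs <;> simp_all
  rw [← Finset.sum_subtype (univ.filter fun p : α × α => p.1 < p.2) (by simp)
    (fun p => (if p.1 = i then f p.1 p.2 else 0) + (if p.2 = i then f p.2 p.1 else 0)),
    sum_filter, Fintype.sum_prod_type]
  simp only [split, sum_add_distrib, sum_ite_irrel, sum_const_zero, sum_ite_eq', mem_univ,
    if_true]
  rw [← sum_add_distrib, sdiff_eq_filter, sum_filter]
  refine sum_congr rfl fun j _ => ?_
  rcases lt_trichotomy i j with h | rfl | h
  · simp [h, h.ne', not_lt_of_gt h]
  · simp
  · simp [h, h.ne, not_lt_of_gt h]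

lemma det_fromBlocks_diagonal_zero {o K : Type*} [Fintype o] [DecidableEq o] [Field K]
    (d : o → K) (hd : ∀ i, d i ≠ 0) (B : Matrix o Unit K) (C : Matrix Unit o K) :
    (fromBlocks (diagonal d) B C 0).det = -(∏ i, d i) * ∑ i, C () i * B i () / d i := by
  let : Invertible d :=
    ⟨fun i => (d i)⁻¹, funext fun i => inv_mul_cancel₀ (hd i),
      funext fun i => mul_inv_cancel₀ (hd i)⟩
  let : Invertible (diagonal d) := diagonalInvertible d
  rw [det_fromBlocks₁₁, invOf_diagonal_eq, det_diagonal, det_unique]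
  simp only [zero_sub, Matrix.neg_apply, Matrix.mul_apply, diagonal_apply, mul_ite, mul_zero,
    sum_ite_eq', mem_univ, if_true, neg_mul, mul_neg, div_eq_mul_inv]
  exact congr_arg (fun s => -((∏ i, d i) * s)) (sum_congr rfl fun i _ => mul_right_comm _ _ _)

lemma rank_eq_card_of_det_submatrix_ne_zero {m o K : Type*} [Fintype m] [Fintype o]
    [DecidableEq m] [Field K] (A : Matrix m o K) (g : m → o) (h : (A.submatrix id g).det ≠ 0) :
    A.rank = Fintype.card m := by
  refine le_antisymm A.rank_le_card_height ?_
  rw [← rank_of_isUnit _ ((isUnit_iff_isUnit_det _).mpr h.isUnit)]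
  exact rank_submatrix_le A id g

lemma card_pairIdx (n : ℕ) : Fintype.card (PairIdx n) = n * (n - 1) / 2 := by
  let e : PairIdx n ≃ Σ j : Fin n, Fin j := {
    toFun p := ⟨p.1.2, ⟨p.1.1, p.2⟩⟩
    invFun x := ⟨(⟨x.2, x.2.isLt.trans x.1.isLt⟩, x.1), x.2.isLt⟩
    left_inv _ := rfl
    right_inv _ := rfl }
  rw [Fintype.card_congr e, Fintype.card_sigma]
  simp only [Fintype.card_fin]
  rw [Fin.sum_univ_eq_sum_range (fun i => i) n, sum_range_id]

section PairValues

variable {n : ℕ} (r : PairIdx n → ℂ) (p : PairIdx n)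

lemma rC_fst_snd : rC r p.1.1 p.1.2 = r p := dif_pos p.2

lemma rC_snd_fst : rC r p.1.2 p.1.1 = r p := by
  rw [rC, dif_neg (asymm p.2), dif_pos p.2]

lemma evalDF_fst_snd : evalDF r p.1.1 p.1.2 = eval r (pderiv p (Fpoly n)) := by
  rw [evalDF, dF, dif_pos p.2]

lemma evalDF_snd_fst : evalDF r p.1.2 p.1.1 = eval r (pderiv p (Fpoly n)) := by
  rw [evalDF, dF, dif_neg (asymm p.2), dif_pos p.2]

end PairValues

lemma Psi_eq_sum_pairIdx {n : ℕ} {c2 : ℤ} (hc2 : c2 < 0) (r : PairIdx n → ℂ)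
    (z : Fin n → ℂ) (i : Fin n) :
    Psi c2 r z i =
      ∑ p : PairIdx n, eval r (pderiv p (Fpoly n)) * r p ^ ((-c2).toNat + 1) *
        ((if p.1.1 = i then z p.1.2 else 0) + (if p.1.2 = i then z p.1.1 else 0)) := by
  rw [Psi, if_pos hc2, show (1 - c2).toNat = (-c2).toNat + 1 by omega,
    ← sum_pairs_incident (fun a b => rC r a b ^ ((-c2).toNat + 1) * evalDF r a b * z b)]
  refine sum_congr rfl fun p _ => ?_
  rw [rC_fst_snd, rC_snd_fst, evalDF_fst_snd, evalDF_snd_fst]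
  split_ifs <;> ring

section Jacobian

variable {n : ℕ} (c2 : ℤ) (r : PairIdx n → ℂ) (z : Fin n → ℂ)

lemma jacMat_inl_inl (p p' : PairIdx n) :
    jacMat c2 (Sum.elim r z) (Sum.inl p) (Sum.inl p') =
      if p' = p then ((-c2).toNat : ℂ) * r p ^ ((-c2).toNat - 1) * (z p.1.1 * z p.1.2 + 1)
      else 0 := by
  simp only [jacMat, of_apply, Sum.elim_inl, gPolyJ, map_sub, pderiv_mul, pderiv_pow, map_add,
    pderiv_X, Pi.single_apply, reduceCtorEq, if_false, Sum.inl.injEq, Derivation.map_one_eq_zero]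
  simp only [eq_comm (a := p)]
  split_ifs <;> simp

lemma jacMat_inl_inr (p : PairIdx n) (m : Fin n) :
    jacMat c2 (Sum.elim r z) (Sum.inl p) (Sum.inr m) =
      r p ^ (-c2).toNat *
        ((if p.1.1 = m then z p.1.2 else 0) + (if p.1.2 = m then z p.1.1 else 0)) := by
  simp only [jacMat, of_apply, Sum.elim_inl, gPolyJ, map_sub, pderiv_mul, pderiv_pow, map_add,
    pderiv_X, Pi.single_apply, reduceCtorEq, if_false, Sum.inr.injEq, Derivation.map_one_eq_zero]
  split_ifs <;> simp [mul_comm]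

lemma jacMat_inr_inl (p : PairIdx n) :
    jacMat c2 (Sum.elim r z) (Sum.inr ()) (Sum.inl p) = eval r (pderiv p (Fpoly n)) := by
  simp only [jacMat, of_apply, Sum.elim_inr, FpolyJ]
  rw [pderiv_rename Sum.inl_injective, eval_rename]
  rfl

lemma jacMat_inr_inr (m : Fin n) : jacMat c2 (Sum.elim r z) (Sum.inr ()) (Sum.inr m) = 0 := by
  simp only [jacMat, of_apply, Sum.elim_inr, FpolyJ]
  rw [pderiv_eq_zero_of_notMem_vars, map_zero]
  intro h
  simpa using vars_rename (R := ℂ) Sum.inl (Fpoly n) h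

end Jacobian

lemma det_jacMat_submatrix_ne_zero {n : ℕ} {c2 : ℤ} (hc2 : c2 < 0) {r : PairIdx n → ℂ}
    {z : Fin n → ℂ}
    (hg : ∀ p : PairIdx n, r p ^ (-c2).toNat * (z p.1.1 * z p.1.2 + 1) - 1 = 0)
    {i : Fin n} (hΨ : Psi c2 r z i ≠ 0) :
    ((jacMat c2 (Sum.elim r z)).submatrix id (Sum.map id fun _ : Unit => i)).det ≠ 0 := by
  set k := (-c2).toNat
  have hk : (k : ℂ) ≠ 0 := Nat.cast_ne_zero.mpr (by omega)
  have hg' (p : PairIdx n) : r p ^ k * (z p.1.1 * z p.1.2 + 1) = 1 := sub_eq_zero.mp (hg p)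
  have hr (p : PairIdx n) : r p ≠ 0 := fun h => by
    simpa [h, zero_pow (show k ≠ 0 by omega)] using hg' p
  have hdiag (p : PairIdx n) : (k : ℂ) * r p ^ (k - 1) * (z p.1.1 * z p.1.2 + 1) = k / r p := by
    have hpow : r p ^ (k - 1) * r p = r p ^ k := by rw [← pow_succ, Nat.sub_add_cancel (by omega)]
    rw [eq_div_iff (hr p)]
    linear_combination (k : ℂ) * (z p.1.1 * z p.1.2 + 1) * hpow + k * hg' p
  have hblocks : (jacMat c2 (Sum.elim r z)).submatrix id (Sum.map id fun _ : Unit => i) =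
      fromBlocks (diagonal fun p => k / r p)
        (of fun p _ => jacMat c2 (Sum.elim r z) (.inl p) (.inr i))
        (of fun _ p => eval r (pderiv p (Fpoly n))) 0 := by
    ext (p | u) (p' | u')
    · rw [submatrix_apply, fromBlocks_apply₁₁, diagonal_apply, id, Sum.map_inl, jacMat_inl_inl]
      split_ifs with h h' h'
      exacts [hdiag p, absurd h.symm h', absurd h'.symm h, rfl]
    · rfl
    · exact jacMat_inr_inl c2 r z p'
    · exact jacMat_inr_inr c2 r z i
  have hsum : ∑ p : PairIdx n, eval r (pderiv p (Fpoly n)) *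
      jacMat c2 (Sum.elim r z) (.inl p) (.inr i) / (k / r p) = Psi c2 r z i / k := by
    rw [Psi_eq_sum_pairIdx hc2, sum_div]
    refine sum_congr rfl fun p _ => ?_
    rw [jacMat_inl_inr]
    field_simp
    ring
  rw [hblocks, det_fromBlocks_diagonal_zero _ (fun p => div_ne_zero hk (hr p))]
  simp only [of_apply, hsum]
  simp [hk, hr, hΨ, prod_ne_zero_iff]

theorem statement12_general {n : ℕ} (c2 : ℤ) (hc2 : c2 < 0)
    (r : PairIdx n → ℂ) (z : Fin n → ℂ)
    (hg : ∀ p : PairIdx n, r p ^ (-c2).toNat * (z p.1.1 * z p.1.2 + 1) - 1 = 0)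
    (hΨ : ∃ i : Fin n, Psi c2 r z i ≠ 0) :
    (jacMat c2 (Sum.elim r z)).rank = n * (n - 1) / 2 + 1 ∧
    ∃ (e : Fin (n * (n - 1) / 2 + 1) → PairIdx n ⊕ Unit)
      (f : Fin (n * (n - 1) / 2 + 1) → JVar n),
      Function.Injective e ∧ Function.Injective f ∧
      ((jacMat c2 (Sum.elim r z)).submatrix e f).det ≠ 0 := by
  obtain ⟨i, hi⟩ := hΨ
  set cols : PairIdx n ⊕ Unit → JVar n := Sum.map id fun _ => i
  have hdet := det_jacMat_submatrix_ne_zero hc2 hg hi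
  have hcols : Function.Injective cols :=
    Function.injective_id.sumMap (Function.injective_of_subsingleton _)
  have hcard : Fintype.card (PairIdx n ⊕ Unit) = n * (n - 1) / 2 + 1 := by
    simp [card_pairIdx]
  let e := (Fintype.equivFinOfCardEq hcard).symm
  refine ⟨hcard ▸ rank_eq_card_of_det_submatrix_ne_zero _ cols hdet, e, cols ∘ e, e.injective,
    hcols.comp e.injective, ?_⟩
  change (((jacMat c2 (Sum.elim r z)).submatrix id cols).submatrix e e).det ≠ 0
  rwa [det_submatrix_equiv_self]

/-- Let `a < 0` be a semi-integer (`c2 = 2a`), and let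
`P = (r, z, Δ_0, m)` be a point with all `r_{ij} ≠ 0`, `g^a_{ij}(P) = 0` for all `i < j`,
and `Ψ^a_{i_0}(P) ≠ 0` for some `i_0`. Then the Jacobian matrix of the `g^a_{ij}` and `F`
with respect to the `R`- and `Z`-variables at `P` has maximal rank `q + 1`; in particular
it has a nonsingular square submatrix of order `q + 1`. -/
theorem statement12 {n : ℕ} (hn : 3 ≤ n) (c2 : ℤ) (hc2 : c2 < 0)
    (r : PairIdx n → ℂ) (z : Fin n → ℂ)
    (hr : ∀ p, r p ≠ 0)
    (hg : ∀ p : PairIdx n, r p ^ (-c2).toNat * (z p.1.1 * z p.1.2 + 1) - 1 = 0)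
    (hΨ : ∃ i : Fin n, Psi c2 r z i ≠ 0) :
    (jacMat c2 (Sum.elim r z)).rank = n * (n - 1) / 2 + 1 ∧
    ∃ (e : Fin (n * (n - 1) / 2 + 1) → PairIdx n ⊕ Unit)
      (f : Fin (n * (n - 1) / 2 + 1) → JVar n),
      Function.Injective e ∧ Function.Injective f ∧
      ((jacMat c2 (Sum.elim r z)).submatrix e f).det ≠ 0 :=
  statement12_general c2 hc2 r z hg hΨ
end

section
/- Let P = (r, z, Δ_0, m) ∈ ℂ^{q+2n+1} be a point such that z_i ≠ 0 for all i = 1, …, n and the Cayley–Menger matrix A(r²) of the numbers r_{ij}² has rank n. Then the (n+1) × (n+1) Jacobian matrix of Γ_0, Γ_1, …, Γ_n with respect to the variables Δ, M_1, …, M_n evaluated at P — namely the matrix whose row for Γ_0 is (0, z_1, …, z_n) and whose row for Γ_l (l = 1, …, n) is (1, z_1 r_{1l}², …, z_n r_{nl}²), with r_{ll} = 0 — has rank n. -/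
/-- The Jacobian matrix of `Γ_0, Γ_1, …, Γ_n` with respect to `Δ, M_1, …, M_n`:
the row for `Γ_0` is `(0, z_1, …, z_n)` and the row for `Γ_l` is
`(1, z_1 r_{1l}², …, z_n r_{nl}²)`. -/
noncomputable def gammaJac {n : ℕ} (r : PairIdx n → ℂ) (z : Fin n → ℂ) :
    Matrix (Fin (n + 1)) (Fin (n + 1)) ℂ :=
  Matrix.of fun l j =>
    Fin.cases (Fin.cases 0 (fun j' => z j') j)
      (fun l' => Fin.cases 1 (fun j' => z j' * rC r j' l' ^ 2) j) l

lemma rC_symm {n : ℕ} (r : PairIdx n → ℂ) (i j : Fin n) : rC r i j = rC r j i := by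
  unfold rC
  rcases lt_trichotomy i j with h | h | h
  · rw [dif_pos h, dif_neg (not_lt_of_gt h), dif_pos h]
  · subst h; simp
  · rw [dif_neg (not_lt_of_gt h), dif_pos h, dif_pos h]

/-- Let `P = (r, z, Δ_0, m)` be a point with all `z_i ≠ 0` and such
that the Cayley–Menger matrix `A(r²)` has rank `n`. Then the Jacobian matrix of
`Γ_0, …, Γ_n` with respect to `Δ, M_1, …, M_n` at `P` has rank `n`. -/
theorem statement13 {n : ℕ} (hn : 3 ≤ n)
    (r : PairIdx n → ℂ) (z : Fin n → ℂ) (Δ0 : ℂ) (m : Fin n → ℂ)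
    (hz : ∀ i, z i ≠ 0)
    (hrank : (cmOf r).rank = n) :
    (gammaJac r z).rank = n := by
  have key : gammaJac r z = cmOf r * Matrix.diagonal (Fin.cases 1 z) := by
    ext i j
    rw [Matrix.mul_diagonal]
    induction i using Fin.cases with
    | zero =>
      induction j using Fin.cases with
      | zero => simp [gammaJac, cmOf]
      | succ j' => simp [gammaJac, cmOf]
    | succ i' =>
      induction j using Fin.cases with
      | zero => simp [gammaJac, cmOf]
      | succ j' => simp [gammaJac, cmOf, rC_symm r i' j', mul_comm]
  rw [key, Matrix.rank_mul_eq_left_of_isUnit_det, hrank]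
  rw [Matrix.det_diagonal]
  refine isUnit_iff_ne_zero.mpr (Finset.prod_ne_zero_iff.mpr fun i _ => ?_)
  induction i using Fin.cases with
  | zero => simp
  | succ i' => simpa using hz i'
end
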